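/- arXiv:math/0410095 — 3 statements merged into one kernel-verified Lean document; each statement's English description precedes it below -/
import Mathlib

section
/- Let ρ(θ) = w(θ)ρ₁(θ) + (1 − w(θ))ρ₂(θ) be a 2×2 mixed state, where ρ₁ = |ψ₁⟩⟨ψ₁|, ρ₂ = |ψ₂⟩⟨ψ₂| with ψ₁, ψ₂ orthonormal depending smoothly on θ, and w(θ) ∈ (0,1) smooth. Then the Hermitian matrix L = (w_{/θ}/w) ρ₁ + (2w − 1) ρ₁_{//θ} − (w_{/θ}/(1 − w)) ρ₂, with ρ₁_{//θ} = 2ρ₁_{/θ}, satisfies the SLD equation ρ_{/θ} = (1/2)(ρ L + L ρ). -/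
set_option maxHeartbeats 1000000

open Matrix

lemma completeness2 (a b : Fin 2 → ℂ) (ha : star a ⬝ᵥ a = 1) (hb : star b ⬝ᵥ b = 1)
    (hab : star a ⬝ᵥ b = 0) :
    vecMulVec a (star a) + vecMulVec b (star b) = 1 := by
  have hba : star b ⬝ᵥ a = 0 := by
    have := congrArg star hab
    simpa [dotProduct, Fin.sum_univ_two, mul_comm] using this
  set U : Matrix (Fin 2) (Fin 2) ℂ := Matrix.of fun i k => ![a, b] k i with hU
  have h1 : Uᴴ * U = 1 := by
    ext k l
    fin_cases k <;> fin_cases l <;>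
      simp_all [hU, Matrix.mul_apply, Matrix.conjTranspose_apply, Fin.sum_univ_two,
        dotProduct, Matrix.one_apply]
  have h2 : U * Uᴴ = 1 := mul_eq_one_comm.mp h1
  ext i j
  have := congrFun (congrFun h2 i) j
  simpa [hU, Matrix.mul_apply, Matrix.conjTranspose_apply, Fin.sum_univ_two,
    vecMulVec_apply] using this

/-- Lemma 1 (SLD of a mixed state): for ρ = w ρ₁ + (1−w) ρ₂ with orthonormal pure
components and |ψ₂⟩ = I₁^{−1/2} (2ρ₁') |ψ₁⟩, the Hermitian matrix
L = (w'/w) ρ₁ + (2w−1)·2ρ₁' − (w'/(1−w)) ρ₂ satisfies ρ' = (1/2)(ρL + Lρ). -/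
theorem mixed_state_SLD (ψ₁ ψ₂ : ℝ → Fin 2 → ℂ) (θ : ℝ)
    (hnorm₁ : ∀ t, star (ψ₁ t) ⬝ᵥ ψ₁ t = 1)
    (hnorm₂ : ∀ t, star (ψ₂ t) ⬝ᵥ ψ₂ t = 1)
    (horth : ∀ t, star (ψ₁ t) ⬝ᵥ ψ₂ t = 0)
    (w : ℝ → ℝ) (w' : ℝ) (hw : ∀ t, 0 < w t ∧ w t < 1)
    (hw' : HasDerivAt w w' θ)
    (ρ₁ ρ₂ ρ : ℝ → Matrix (Fin 2) (Fin 2) ℂ)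
    (hρ₁ : ∀ t, ρ₁ t = vecMulVec (ψ₁ t) (star (ψ₁ t)))
    (hρ₂ : ∀ t, ρ₂ t = vecMulVec (ψ₂ t) (star (ψ₂ t)))
    (hρ : ∀ t, ρ t = (w t : ℂ) • ρ₁ t + ((1 - w t : ℝ) : ℂ) • ρ₂ t)
    (ρ₁' ρ' : Matrix (Fin 2) (Fin 2) ℂ)
    (hρ₁' : ∀ i j, HasDerivAt (fun t => ρ₁ t i j) (ρ₁' i j) θ)
    (hρ'd : ∀ i j, HasDerivAt (fun t => ρ t i j) (ρ' i j) θ)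
    (I₁ : ℝ) (hI₁pos : 0 < I₁) (hI₁ : (2 : ℂ) * (ρ₁' ^ 2).trace = (I₁ : ℂ))
    (hψ₂ : ψ₂ θ = (((Real.sqrt I₁)⁻¹ : ℝ) : ℂ) • ((2 : ℂ) • ρ₁').mulVec (ψ₁ θ))
    (L : Matrix (Fin 2) (Fin 2) ℂ)
    (hL : L = ((w' / w θ : ℝ) : ℂ) • ρ₁ θ + ((2 * w θ - 1 : ℝ) : ℂ) • ((2 : ℂ) • ρ₁')
        - ((w' / (1 - w θ) : ℝ) : ℂ) • ρ₂ θ) :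
    ρ' = (1/2 : ℂ) • (ρ θ * L + L * ρ θ) := by
  -- completeness: ρ₁ t + ρ₂ t = 1
  have hone : ∀ t, ρ₁ t + ρ₂ t = 1 := fun t => by
    rw [hρ₁ t, hρ₂ t]
    exact completeness2 _ _ (hnorm₁ t) (hnorm₂ t) (horth t)
  have h2θ : ρ₂ θ = 1 - ρ₁ θ := by
    rw [eq_sub_iff_add_eq, add_comm]; exact hone θ
  -- idempotence of ρ₁
  have hPsq : ∀ t, ρ₁ t * ρ₁ t = ρ₁ t := fun t => by
    have hn := hnorm₁ t
    simp only [dotProduct, Fin.sum_univ_two, Pi.star_apply] at hn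
    ext i j
    simp only [hρ₁ t, Matrix.mul_apply, vecMulVec_apply, Fin.sum_univ_two, Pi.star_apply]
    linear_combination (ψ₁ t i * star (ψ₁ t j)) * hn
  -- differentiate ρ₁ * ρ₁ = ρ₁  to get  P D + D P = D
  have hPD : ρ₁ θ * ρ₁' + ρ₁' * ρ₁ θ = ρ₁' := by
    ext i j
    have h1 : HasDerivAt (fun t => (ρ₁ t * ρ₁ t) i j)
        ((ρ₁' * ρ₁ θ + ρ₁ θ * ρ₁') i j) θ := by
      simp only [Matrix.mul_apply, Matrix.add_apply]
      rw [← Finset.sum_add_distrib]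
      exact HasDerivAt.fun_sum fun k _ => by
        simpa [mul_comm] using (hρ₁' i k).fun_mul (hρ₁' k j)
    have h2 : (fun t => (ρ₁ t * ρ₁ t) i j) = fun t => ρ₁ t i j := by
      funext t; rw [hPsq t]
    rw [h2] at h1
    have h3 := (hρ₁' i j).unique h1
    simp only [Matrix.add_apply] at h3 ⊢
    rw [h3]; ring
  -- derivative of w as a complex-valued function
  have hwC : HasDerivAt (fun t => (w t : ℂ)) (w' : ℂ) θ := hw'.ofReal_comp
  -- compute ρ'
  have hρ'eq : ρ' = (2 * (w' : ℂ)) • ρ₁ θ + (2 * (w θ : ℂ) - 1) • ρ₁'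
      - (w' : ℂ) • (1 : Matrix (Fin 2) (Fin 2) ℂ) := by
    ext i j
    have h2 : ∀ t, ρ₂ t = 1 - ρ₁ t := fun t => by
      rw [eq_sub_iff_add_eq, add_comm]; exact hone t
    have hfun : (fun t => ρ t i j) = fun t =>
        (w t : ℂ) * ρ₁ t i j + (1 - (w t : ℂ)) * ((1 : Matrix (Fin 2) (Fin 2) ℂ) i j - ρ₁ t i j) := by
      funext t
      rw [hρ t, h2 t]
      push_cast
      simp [Matrix.add_apply, Matrix.sub_apply, Matrix.smul_apply]
    have h1 : HasDerivAt (fun t => ρ t i j)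
        ((w' : ℂ) * ρ₁ θ i j + (w θ : ℂ) * ρ₁' i j
          + ((-(w' : ℂ)) * ((1 : Matrix (Fin 2) (Fin 2) ℂ) i j - ρ₁ θ i j)
            + (1 - (w θ : ℂ)) * (-(ρ₁' i j)))) θ := by
      rw [hfun]
      have hd := (hwC.fun_mul (hρ₁' i j)).fun_add
        (((hasDerivAt_const θ (1:ℂ)).fun_sub hwC).fun_mul
          ((hasDerivAt_const θ ((1 : Matrix (Fin 2) (Fin 2) ℂ) i j)).fun_sub (hρ₁' i j)))
      refine hd.congr_deriv ?_
      ring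
    have h3 := (hρ'd i j).unique h1
    rw [h3]
    simp only [Matrix.add_apply, Matrix.sub_apply, Matrix.smul_apply, smul_eq_mul]
    ring
  -- final algebra
  have hw0 : (w θ : ℂ) ≠ 0 := by
    exact_mod_cast ne_of_gt (hw θ).1
  have hw1 : (1 : ℂ) - (w θ : ℂ) ≠ 0 := by
    have : (w θ : ℂ) ≠ 1 := by exact_mod_cast ne_of_lt (hw θ).2
    intro h; apply this; linear_combination -h
  rw [hρ'eq, hL, hρ θ, h2θ]
  push_cast
  simp only [mul_add, add_mul, mul_sub, sub_mul, smul_add, smul_sub, smul_mul_assoc,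
    mul_smul_comm, smul_smul, Matrix.mul_one, Matrix.one_mul]
  rw [hPsq θ]
  set X := ρ₁ θ * ρ₁' with hX
  set Y := ρ₁' * ρ₁ θ with hY
  rw [← hPD]
  have hw2 : ((w θ : ℂ)) ^ 2 * 32 - ((w θ : ℂ)) ^ 3 * 32 ≠ 0 := by
    intro h
    apply mul_ne_zero (mul_ne_zero (mul_ne_zero hw0 hw0) hw1) (by norm_num : (32:ℂ) ≠ 0)
    linear_combination h
  match_scalars
  all_goals field_simp
  all_goals try ring
  all_goals (field_simp [hw2]; ring)
end

section
/- If the weight w ∈ (0,1) does not depend on θ, the quantum information of the mixed state ρ(θ) = wρ₁(θ) + (1−w)ρ₂(θ) is I(θ) = (2w−1)² I₁(θ), and in particular I(θ) < I₁(θ) whenever w ≠ 0, 1 and I₁(θ) > 0; i.e., mixing strictly decreases quantum information. -/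
open Matrix

/-- Completeness: two orthonormal vectors in ℂ² give complementary rank-one projections. -/
lemma two_orthonormal_complete (ψ₁ ψ₂ : Fin 2 → ℂ)
    (h1 : star ψ₁ ⬝ᵥ ψ₁ = 1) (h2 : star ψ₂ ⬝ᵥ ψ₂ = 1) (h3 : star ψ₁ ⬝ᵥ ψ₂ = 0) :
    vecMulVec ψ₁ (star ψ₁) + vecMulVec ψ₂ (star ψ₂) = 1 := by
  set U : Matrix (Fin 2) (Fin 2) ℂ := Matrix.of ![star ψ₁, star ψ₂] with hU
  simp only [dotProduct, Fin.sum_univ_two, Pi.star_apply] at h1 h2 h3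
  have h4 : ψ₁ 0 * star (ψ₂ 0) + ψ₁ 1 * star (ψ₂ 1) = 0 := by
    have := congrArg star h3
    simp only [star_add, star_mul', star_star, star_zero] at this
    linear_combination this
  have hUU : U * Uᴴ = 1 := by
    ext i j
    fin_cases i <;> fin_cases j <;>
      simp only [hU, Matrix.mul_apply, Matrix.conjTranspose_apply, Matrix.of_apply,
        Fin.sum_univ_two, Matrix.cons_val_zero, Matrix.cons_val_one, Matrix.head_cons,
        Matrix.one_apply, Pi.star_apply, star_star, Fin.zero_eta, Fin.mk_one,
        starRingEnd_apply, if_true, one_ne_zero, if_false, Fin.one_eq_zero_iff,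
        Fin.zero_eq_one_iff, Nat.succ_ne_self, ite_false, ite_true, ne_eq,
        OfNat.ofNat_ne_one, OfNat.one_ne_ofNat, reduceIte] <;>
      first
        | linear_combination h1
        | linear_combination h2
        | linear_combination h3
        | linear_combination h4
  have hUU' : Uᴴ * U = 1 := mul_eq_one_comm.mp hUU
  ext i j
  have := congrFun (congrFun hUU' i) j
  simp only [hU, Matrix.mul_apply, Matrix.conjTranspose_apply, Matrix.of_apply,
    Fin.sum_univ_two, Matrix.cons_val_zero, Matrix.cons_val_one, Matrix.head_cons,
    Pi.star_apply, star_star, starRingEnd_apply] at this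
  simp only [Matrix.add_apply, vecMulVec_apply, Pi.star_apply]
  linear_combination this

/-- If the weight w is constant, the quantum information of the mixed state is
I(θ) = (2w−1)² I₁(θ) < I₁(θ): mixing strictly decreases quantum information. -/
theorem mixed_state_constant_weight_info (ψ₁ ψ₂ : ℝ → Fin 2 → ℂ) (θ : ℝ)
    (hnorm₁ : ∀ t, star (ψ₁ t) ⬝ᵥ ψ₁ t = 1)
    (hnorm₂ : ∀ t, star (ψ₂ t) ⬝ᵥ ψ₂ t = 1)
    (horth : ∀ t, star (ψ₁ t) ⬝ᵥ ψ₂ t = 0)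
    (w : ℝ) (hw0 : 0 < w) (hw1 : w < 1) (hwhalf : w ≠ 1/2)
    (ρ₁ ρ₂ ρ : ℝ → Matrix (Fin 2) (Fin 2) ℂ)
    (hρ₁ : ∀ t, ρ₁ t = vecMulVec (ψ₁ t) (star (ψ₁ t)))
    (hρ₂ : ∀ t, ρ₂ t = vecMulVec (ψ₂ t) (star (ψ₂ t)))
    (hρ : ∀ t, ρ t = (w : ℂ) • ρ₁ t + ((1 - w : ℝ) : ℂ) • ρ₂ t)
    (ρ₁' : Matrix (Fin 2) (Fin 2) ℂ)
    (hρ₁' : ∀ i j, HasDerivAt (fun t => ρ₁ t i j) (ρ₁' i j) θ)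
    (I₁ : ℝ) (hI₁pos : 0 < I₁) (hI₁ : (2 : ℂ) * (ρ₁' ^ 2).trace = (I₁ : ℂ))
    (L : Matrix (Fin 2) (Fin 2) ℂ)
    (hL : L = ((2 * w - 1 : ℝ) : ℂ) • ((2 : ℂ) • ρ₁')) :
    (ρ θ * L ^ 2).trace = (((2 * w - 1) ^ 2 * I₁ : ℝ) : ℂ)
      ∧ (2 * w - 1) ^ 2 * I₁ < I₁ := by
  set P := ρ₁ θ with hP
  set D := ρ₁' with hD
  -- ρ₁ is a projector at every t
  have hproj : ∀ t, ρ₁ t * ρ₁ t = ρ₁ t := by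
    intro t
    have h := hnorm₁ t
    simp only [dotProduct, Fin.sum_univ_two, Pi.star_apply] at h
    ext i j
    simp only [hρ₁ t, Matrix.mul_apply, vecMulVec_apply, Fin.sum_univ_two, Pi.star_apply]
    linear_combination (ψ₁ t i * star (ψ₁ t j)) * h
  -- completeness: ρ₁ θ + ρ₂ θ = 1
  have hcomp : ρ₁ θ + ρ₂ θ = 1 := by
    rw [hρ₁ θ, hρ₂ θ]
    exact two_orthonormal_complete _ _ (hnorm₁ θ) (hnorm₂ θ) (horth θ)
  -- differentiate the projector identity: D = D P + P D
  have hDP : D = D * P + P * D := by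
    ext i j
    have hderiv : HasDerivAt (fun t => (ρ₁ t * ρ₁ t) i j)
        ((ρ₁' * ρ₁ θ + ρ₁ θ * ρ₁') i j) θ := by
      simp only [Matrix.mul_apply, Matrix.add_apply, Fin.sum_univ_two]
      have h00 := (hρ₁' i 0).mul (hρ₁' 0 j)
      have h11 := (hρ₁' i 1).mul (hρ₁' 1 j)
      convert h00.add h11 using 1
      · rfl
      · rfl
      · rw [hD]; ring
    have heq : (fun t => (ρ₁ t * ρ₁ t) i j) = fun t => ρ₁ t i j := by
      funext t; rw [hproj t]
    rw [heq] at hderiv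
    exact ((hρ₁' i j).unique hderiv)
  -- key trace identity: tr(D²) = 2 tr(P D²)
  have hDD : (D * D).trace = 2 * (P * (D * D)).trace := by
    nth_rewrite 1 [hDP]
    rw [Matrix.add_mul, trace_add,
      show D * P * D = D * (P * D) from mul_assoc _ _ _,
      trace_mul_comm D (P * D)]
    rw [mul_assoc P D D]
    ring
  have hL2 : L ^ 2 = ((2 * w - 1 : ℝ) ^ 2 * 4 : ℂ) • (D * D) := by
    rw [hL, sq, smul_mul_smul_comm, smul_mul_smul_comm, smul_smul]
    push_cast
    ring_nf
  have hQ : ρ₂ θ = 1 - P := by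
    rw [hP, eq_sub_iff_add_eq, add_comm, hcomp]
  have htr : (ρ θ * L ^ 2).trace = (((2 * w - 1) ^ 2 * I₁ : ℝ) : ℂ) := by
    rw [hρ θ, ← hP, hL2, hQ]
    rw [Matrix.add_mul, Matrix.smul_mul, Matrix.smul_mul, Matrix.mul_smul, Matrix.mul_smul,
      Matrix.sub_mul, Matrix.one_mul, trace_add, trace_smul, trace_smul, trace_smul,
      trace_smul, trace_sub]
    rw [sq] at hI₁
    simp only [smul_eq_mul]
    push_cast
    linear_combination (2 * (2 * (w:ℂ) - 1) ^ 2 * (1 - 2 * (w:ℂ))) * hDD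
      + ((2 * (w:ℂ) - 1) ^ 2) * hI₁
  refine ⟨htr, ?_⟩
  nlinarith [mul_pos (mul_pos hw0 (sub_pos.mpr hw1)) hI₁pos]
end

section
/- Let ρ be a 2×2 density matrix of full rank, m a positive semidefinite 2×2 matrix with p = tr(ρm) > 0, and L the SLD of ρ at θ. Then for the classical Fisher information contribution p^{-1}(tr(ρ_{/θ} m))² and quantum term, the Cauchy–Schwarz inequality for the Hilbert–Schmidt inner product gives (tr(ρ_{/θ} m))² = (Re tr(m^{1/2} L ρ m^{1/2}))² ≤ tr(ρ m) · tr(m^{1/2} L ρ L m^{1/2}); consequently p^{-1}(tr(ρ_{/θ} m))² ≤ tr(L m L ρ). -/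
open Matrix
open scoped ComplexOrder
open scoped MatrixOrder

lemma trace_cs (A B : Matrix (Fin 2) (Fin 2) ℂ) :
    (((Aᴴ * B).trace).re) ^ 2 ≤ ((Aᴴ * A).trace).re * ((Bᴴ * B).trace).re := by
  let x : EuclideanSpace ℂ (Fin 2 × Fin 2) := WithLp.toLp 2 (fun p : Fin 2 × Fin 2 => A p.1 p.2)
  let y : EuclideanSpace ℂ (Fin 2 × Fin 2) := WithLp.toLp 2 (fun p : Fin 2 × Fin 2 => B p.1 p.2)
  have hin : ∀ (C D : Matrix (Fin 2) (Fin 2) ℂ),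
      (Cᴴ * D).trace = ∑ p : Fin 2 × Fin 2, (starRingEnd ℂ) (C p.1 p.2) * D p.1 p.2 := by
    intro C D
    rw [Fintype.sum_prod_type]
    simp [Matrix.trace, Matrix.mul_apply, Matrix.conjTranspose_apply, Matrix.diag,
      Fin.sum_univ_two]
    ring
  have hxy : (Aᴴ * B).trace = inner ℂ x y := by
    rw [hin]; simp [x, y, PiLp.inner_apply, RCLike.inner_apply, mul_comm]
  have hxx : (Aᴴ * A).trace = inner ℂ x x := by
    rw [hin]; simp [x, PiLp.inner_apply, RCLike.inner_apply, mul_comm, -inner_self_eq_norm_sq_to_K]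
  have hyy : (Bᴴ * B).trace = inner ℂ y y := by
    rw [hin]; simp [y, PiLp.inner_apply, RCLike.inner_apply, mul_comm, -inner_self_eq_norm_sq_to_K]
  rw [hxy, hxx, hyy]
  have h1 : ((inner ℂ x y : ℂ)).re ^ 2 ≤ ‖(inner ℂ x y : ℂ)‖ ^ 2 := by
    rw [← sq_abs]
    apply pow_le_pow_left₀ (abs_nonneg _) _ 2
    exact Complex.abs_re_le_norm _
  refine h1.trans ?_
  have h2 := norm_inner_le_norm (𝕜 := ℂ) x y
  calc ‖(inner ℂ x y : ℂ)‖ ^ 2 ≤ (‖x‖ * ‖y‖) ^ 2 := by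
        apply pow_le_pow_left₀ (norm_nonneg _) h2
    _ = ((inner ℂ x x : ℂ)).re * ((inner ℂ y y : ℂ)).re := by
        rw [mul_pow, ← @inner_self_eq_norm_sq ℂ, ← @inner_self_eq_norm_sq ℂ]
        rfl

/-- Cauchy–Schwarz step of the information inequality: for a full-rank 2×2 density
matrix ρ, PSD m with p = tr(ρm) > 0, and SLD L (ρ' = (1/2)(ρL + Lρ)),
(tr(ρ' m))² = (Re tr(m^{1/2} L ρ m^{1/2}))² ≤ tr(ρm)·tr(m^{1/2} L ρ L m^{1/2}),
hence p⁻¹ (tr(ρ' m))² ≤ tr(L m L ρ). -/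
theorem fisher_cauchy_schwarz (ρ : Matrix (Fin 2) (Fin 2) ℂ)
    (hρ : ρ.PosDef) (htr : ρ.trace = 1)
    (m mhalf : Matrix (Fin 2) (Fin 2) ℂ)
    (hm : m.PosSemidef) (hmhalf : mhalf.PosSemidef ∧ mhalf ^ 2 = m)
    (p : ℝ) (hp : p = ((ρ * m).trace).re) (hppos : 0 < p)
    (L ρ' : Matrix (Fin 2) (Fin 2) ℂ)
    (hLherm : L.IsHermitian)
    (hSLD : ρ' = (1/2 : ℂ) • (ρ * L + L * ρ)) :
    (ρ' * m).trace = ((((mhalf * L * ρ * mhalf).trace).re : ℝ) : ℂ) ∧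
      (((mhalf * L * ρ * mhalf).trace).re) ^ 2
        ≤ ((ρ * m).trace).re * ((mhalf * L * ρ * L * mhalf).trace).re ∧
      p⁻¹ * (((ρ' * m).trace).re) ^ 2 ≤ ((L * m * L * ρ).trace).re := by
  obtain ⟨hmh, hm2⟩ := hmhalf
  have hmm : mhalf * mhalf = m := by rw [← pow_two, hm2]
  set R := CFC.sqrt ρ with hR
  have hRps : R.PosSemidef := Matrix.nonneg_iff_posSemidef.mp (CFC.sqrt_nonneg ρ)
  have hRR : R * R = ρ := CFC.sqrt_mul_sqrt_self ρ (Matrix.nonneg_iff_posSemidef.mpr hρ.posSemidef)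
  have hRh : Rᴴ = R := hRps.1
  have hmhh : mhalfᴴ = mhalf := hmh.1
  have hρh : ρᴴ = ρ := hρ.1
  have hLh : Lᴴ = L := hLherm
  -- conjugation lemmas for entries
  have cρ : ∀ i j, (starRingEnd ℂ) (ρ i j) = ρ j i := by
    intro i j
    conv_rhs => rw [← hρh]
    simp [Matrix.conjTranspose_apply]
  have cL : ∀ i j, (starRingEnd ℂ) (L i j) = L j i := by
    intro i j
    conv_rhs => rw [← hLh]
    simp [Matrix.conjTranspose_apply]
  have cmh : ∀ i j, (starRingEnd ℂ) (mhalf i j) = mhalf j i := by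
    intro i j
    conv_rhs => rw [← hmhh]
    simp [Matrix.conjTranspose_apply]
  -- part 1
  have part1 : (ρ' * m).trace = ((((mhalf * L * ρ * mhalf).trace).re : ℝ) : ℂ) := by
    have h1 : (ρ' * m).trace = (1/2 : ℂ) * ((mhalf * L * ρ * mhalf).trace
        + (starRingEnd ℂ) ((mhalf * L * ρ * mhalf).trace)) := by
      rw [hSLD, ← hmm]
      simp only [Matrix.trace, Matrix.mul_apply, Matrix.smul_apply, Matrix.add_apply,
        Matrix.diag, Fin.sum_univ_two, smul_eq_mul, map_add, _root_.map_mul, cρ, cL, cmh]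
      ring
    rw [h1, Complex.add_conj]
    push_cast
    ring
  refine ⟨part1, ?_, ?_⟩
  · have key := trace_cs (mhalf * R) (mhalf * L * R)
    have e1 : ((mhalf * R)ᴴ * (mhalf * L * R)).trace = (mhalf * L * ρ * mhalf).trace := by
      rw [Matrix.conjTranspose_mul, hRh, hmhh, ← hRR]
      simp only [Matrix.trace, Matrix.mul_apply, Matrix.diag, Fin.sum_univ_two]
      ring
    have e2 : ((mhalf * R)ᴴ * (mhalf * R)).trace = (ρ * m).trace := by
      rw [Matrix.conjTranspose_mul, hRh, hmhh, ← hRR, ← hmm]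
      simp only [Matrix.trace, Matrix.mul_apply, Matrix.diag, Fin.sum_univ_two]
      ring
    have e3 : ((mhalf * L * R)ᴴ * (mhalf * L * R)).trace
        = (mhalf * L * ρ * L * mhalf).trace := by
      rw [Matrix.conjTranspose_mul, Matrix.conjTranspose_mul, hRh, hmhh, hLh, ← hRR]
      simp only [Matrix.trace, Matrix.mul_apply, Matrix.diag, Fin.sum_univ_two]
      ring
    rw [e1, e2, e3] at key
    exact key
  · have e4 : (L * m * L * ρ).trace = (mhalf * L * ρ * L * mhalf).trace := by
      rw [← hmm]
      simp only [Matrix.trace, Matrix.mul_apply, Matrix.diag, Fin.sum_univ_two]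
      ring
    have hre : ((ρ' * m).trace).re = ((mhalf * L * ρ * mhalf).trace).re := by
      rw [part1]; simp
    rw [hre, e4]
    have key := trace_cs (mhalf * R) (mhalf * L * R)
    have e1 : ((mhalf * R)ᴴ * (mhalf * L * R)).trace = (mhalf * L * ρ * mhalf).trace := by
      rw [Matrix.conjTranspose_mul, hRh, hmhh, ← hRR]
      simp only [Matrix.trace, Matrix.mul_apply, Matrix.diag, Fin.sum_univ_two]
      ring
    have e2 : ((mhalf * R)ᴴ * (mhalf * R)).trace = (ρ * m).trace := by
      rw [Matrix.conjTranspose_mul, hRh, hmhh, ← hRR, ← hmm]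
      simp only [Matrix.trace, Matrix.mul_apply, Matrix.diag, Fin.sum_univ_two]
      ring
    have e3 : ((mhalf * L * R)ᴴ * (mhalf * L * R)).trace
        = (mhalf * L * ρ * L * mhalf).trace := by
      rw [Matrix.conjTranspose_mul, Matrix.conjTranspose_mul, hRh, hmhh, hLh, ← hRR]
      simp only [Matrix.trace, Matrix.mul_apply, Matrix.diag, Fin.sum_univ_two]
      ring
    rw [e1, e2, e3] at key
    rw [inv_mul_le_iff₀ hppos, hp]
    linarith [key, mul_comm ((ρ * m).trace.re) ((mhalf * L * ρ * L * mhalf).trace.re)]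
end
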